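/- arXiv:1207.2354 — 9 statements merged into one kernel-verified Lean document; each statement's English description precedes it below -/
import Mathlib

section
/- If a symmetric function F of arity r ≥ 2 on a finite domain D factors as F(x_1,...,x_r) = A(x_1)·B(x_2,...,x_r) for a unary function A and an (r-1)-ary function B, then there exists a constant c such that F(x_1,...,x_r) = c·∏_{i=1}^r A(x_i). -/
/-!
By symmetry the factorisation `F x = A (x 0) * B (…)` holds with any coordinate `i` in the role
of `0`, so changing `x i` to `d` multiplies `F x` by `A d / A (x i)`. Changing the coordinates
of a point `y` with `F y ≠ 0` one at a time into those of an arbitrary `x` then gives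
`F x * ∏ A (y i) = F y * ∏ A (x i)`, and `∏ A (y i) ≠ 0` because `A (y i)` divides `F y`.
-/

open Function Finset

section Exchange

variable {ι D R : Type*} [CommRing R] [DecidableEq ι] {F : (ι → D) → R} {A : D → R}

theorem mul_prod_piecewise_eq_of_update
    (hupd : ∀ x i d, F (update x i d) * A (x i) = F x * A d) (x y : ι → D) (s : Finset ι) :
    F (s.piecewise x y) * ∏ i ∈ s, A (y i) = F y * ∏ i ∈ s, A (x i) := by
  induction s using Finset.induction_on with
  | empty => simp
  | insert a s has ih =>
    have hstep := hupd (s.piecewise x y) a (x a)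
    rw [piecewise_eq_of_notMem _ _ _ has] at hstep
    rw [piecewise_insert, prod_insert has, prod_insert has]
    linear_combination (∏ i ∈ s, A (y i)) * hstep + A (x a) * ih

theorem mul_prod_eq_mul_prod_of_update [Fintype ι]
    (hupd : ∀ x i d, F (update x i d) * A (x i) = F x * A d) (x y : ι → D) :
    F x * ∏ i, A (y i) = F y * ∏ i, A (x i) := by
  simpa using mul_prod_piecewise_eq_of_update hupd x y univ

end Exchange

section Factorisation

variable {D R : Type*} [CommRing R] {n : ℕ} {F : (Fin (n + 1) → D) → R} {A : D → R}
  {B : (Fin n → D) → R}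

theorem eq_mul_of_symmetric_of_eq_mul (hsym : ∀ (σ : Equiv.Perm (Fin (n + 1))) x, F (x ∘ σ) = F x)
    (hfac : ∀ x, F x = A (x 0) * B (fun i => x i.succ)) (x : Fin (n + 1) → D) (i : Fin (n + 1)) :
    F x = A (x i) * B (fun j => x (Equiv.swap 0 i j.succ)) := by
  rw [← hsym (Equiv.swap 0 i) x, hfac]
  simp

theorem update_mul_eq_mul_of_symmetric_of_eq_mul
    (hsym : ∀ (σ : Equiv.Perm (Fin (n + 1))) x, F (x ∘ σ) = F x)
    (hfac : ∀ x, F x = A (x 0) * B (fun i => x i.succ)) (x : Fin (n + 1) → D) (i : Fin (n + 1))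
    (d : D) : F (update x i d) * A (x i) = F x * A d := by
  have hrest : (fun j : Fin n => update x i d (Equiv.swap 0 i j.succ))
      = fun j => x (Equiv.swap 0 i j.succ) := by
    funext j
    refine update_of_ne (fun h => Fin.succ_ne_zero j ?_) _ _
    rwa [Equiv.swap_apply_eq_iff, Equiv.swap_apply_right] at h
  rw [eq_mul_of_symmetric_of_eq_mul hsym hfac (update x i d) i, hrest, update_self,
    eq_mul_of_symmetric_of_eq_mul hsym hfac x i]
  ring

end Factorisation

theorem stmt_0_general {D : Type*} (n : ℕ)
    (F : (Fin (n + 2) → D) → ℂ) (A : D → ℂ) (B : (Fin (n + 1) → D) → ℂ)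
    (hsym : ∀ (σ : Equiv.Perm (Fin (n + 2))) (x : Fin (n + 2) → D), F (x ∘ σ) = F x)
    (hfac : ∀ x : Fin (n + 2) → D, F x = A (x 0) * B (fun i => x i.succ)) :
    ∃ c : ℂ, ∀ x : Fin (n + 2) → D, F x = c * ∏ i, A (x i) := by
  by_cases hzero : ∀ x, F x = 0
  · exact ⟨0, fun x => by simp [hzero x]⟩
  push Not at hzero
  obtain ⟨y, hy⟩ := hzero
  have hAy : ∏ i, A (y i) ≠ 0 := prod_ne_zero_iff.2 fun i _ hAi => hy <| by
    rw [eq_mul_of_symmetric_of_eq_mul hsym hfac y i, hAi, zero_mul]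
  refine ⟨F y / ∏ i, A (y i), fun x => ?_⟩
  rw [div_mul_eq_mul_div, eq_div_iff hAy]
  exact mul_prod_eq_mul_prod_of_update (update_mul_eq_mul_of_symmetric_of_eq_mul hsym hfac) x y

/-- If a symmetric function `F` of arity `r ≥ 2` (here `r = n+2`) on a finite
domain `D` factors as `F x = A (x 0) * B (x ∘ succ)`, then `F` is a constant
times the product of `A` over all coordinates. -/
theorem stmt_0 {D : Type*} [Fintype D] (n : ℕ)
    (F : (Fin (n + 2) → D) → ℂ) (A : D → ℂ) (B : (Fin (n + 1) → D) → ℂ)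
    (hsym : ∀ (σ : Equiv.Perm (Fin (n + 2))) (x : Fin (n + 2) → D), F (x ∘ σ) = F x)
    (hfac : ∀ x : Fin (n + 2) → D, F x = A (x 0) * B (fun i => x i.succ)) :
    ∃ c : ℂ, ∀ x : Fin (n + 2) → D, F x = c * ∏ i, A (x i) :=
  stmt_0_general n F A B hsym hfac
end

section
/- If a symmetric function F of arity r+s on a finite domain factors as F = A(x_1,...,x_r)·B(x_{r+1},...,x_{r+s}) with r,s ≥ 1, then there exist a constant c and a unary function C such that F(x_1,...,x_{r+s}) = c·∏_{i=1}^{r+s} C(x_i). In particular, any decomposable symmetric function is a tensor power of a unary function. -/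
/-!
Let `p` be a position of the `A`-block and `q` one of the `B`-block. Swapping `p` and `q` in a
point that carries the `A`-block of `x` and the `B`-block of `y` turns the factorisation into the
exchange law `F x * F y = F (x[p ↦ y q]) * F (y[q ↦ x p])`. With `y = x₀`, `F x₀ ≠ 0`, and
`C a = F (x₀[q ↦ a])`, it says that changing coordinate `p` of `x` from `a` to `d` multiplies
`F x` by `C d / C a`, and by symmetry the same holds at every position. Resetting the coordinates
one by one to `x₀ q` gives `F x * C (x₀ q) ^ (r + s) = F (fun _ => x₀ q) * ∏ i, C (x i)`.
-/

open Function Finset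

section UpdateRatio

variable {ι D M : Type*} [DecidableEq ι]

theorem mul_pow_card_eq_of_update_mul [Fintype ι] [CommMonoid M] {F : (ι → D) → M}
    {C : D → M} (h : ∀ x i d, F (update x i d) * C (x i) = F x * C d) (d₀ : D) (x : ι → D) :
    F x * C d₀ ^ Fintype.card ι = F (fun _ => d₀) * ∏ i, C (x i) := by
  have reset : ∀ T : Finset ι,
      F x * C d₀ ^ #T = F (T.piecewise (fun _ => d₀) x) * ∏ i ∈ T, C (x i) := by
    intro T
    induction T using Finset.induction_on with
    | empty => simp
    | insert j T hj ih =>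
      rw [card_insert_of_notMem hj, pow_succ, ← mul_assoc, ih, mul_right_comm, ← h,
        piecewise_eq_of_notMem _ _ _ hj, piecewise_insert, prod_insert hj, mul_assoc]
  simpa using reset univ

theorem update_mul_eq_of_perm_invariant [Mul M] {F : (ι → D) → M} {C : D → M}
    (hsym : ∀ (σ : Equiv.Perm ι) x, F (x ∘ σ) = F x) (p : ι)
    (hp : ∀ x d, F (update x p d) * C (x p) = F x * C d) (x : ι → D) (i : ι) (d : D) :
    F (update x i d) * C (x i) = F x * C d := by
  have h := hp (x ∘ Equiv.swap p i) d
  rwa [← update_comp_eq_of_injective _ (Equiv.swap p i).injective, hsym, hsym, comp_apply,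
    Equiv.swap_apply_left] at h

theorem update_mul_eq_of_exchange [Mul M] {F : (ι → D) → M} (p q : ι)
    (hex : ∀ x y, F x * F y = F (update x p (y q)) * F (update y q (x p)))
    (y₀ x : ι → D) (d : D) :
    F (update x p d) * F (update y₀ q (x p)) = F x * F (update y₀ q d) := by
  rw [hex]
  simp

end UpdateRatio

section Exchange

variable {ι D M : Type*} [DecidableEq ι] [CommMonoid M]

theorem mul_eq_mul_update_of_eq_mul {S : Set ι} {F G H : (ι → D) → M}
    (hF : ∀ x, F x = G x * H x) (hG : ∀ x y, Set.EqOn x y S → G x = G y)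
    (hH : ∀ x y, Set.EqOn x y Sᶜ → H x = H y) {p q : ι}
    (hswap : ∀ x, F (x ∘ Equiv.swap p q) = F x) (hp : p ∈ S) (hq : q ∉ S) (x y : ι → D) :
    F x * F y = F (update x p (y q)) * F (update y q (x p)) := by
  classical
  set z : ι → D := fun i => if i ∈ S then x i else y i
  have hzG : G (z ∘ Equiv.swap p q) = G (update x p (y q)) := by
    refine hG _ _ fun i hi => ?_
    obtain rfl | hip := eq_or_ne i p
    · simp [z, hq]
    · have hiq : i ≠ q := ne_of_mem_of_not_mem hi hq
      simp [z, Equiv.swap_apply_of_ne_of_ne hip hiq, hip, hi]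
  have hzH : H (z ∘ Equiv.swap p q) = H (update y q (x p)) := by
    refine hH _ _ fun i hi => ?_
    obtain rfl | hiq := eq_or_ne i q
    · simp [z, hp]
    · have hip : i ≠ p := (ne_of_mem_of_not_mem hp hi).symm
      simp only [Set.mem_compl_iff] at hi
      simp [z, Equiv.swap_apply_of_ne_of_ne hip hiq, hiq, hi]
  have hxH : H (update x p (y q)) = H x :=
    hH _ _ fun i hi => update_of_ne (ne_of_mem_of_not_mem hp hi).symm _ _
  have hyG : G (update y q (x p)) = G y :=
    hG _ _ fun i hi => update_of_ne (ne_of_mem_of_not_mem hi hq) _ _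
  have hzx : G z = G x := hG _ _ fun i hi => if_pos hi
  have hzy : H z = H y := hH _ _ fun i hi => if_neg hi
  calc F x * F y = (G z * H z) * (G y * H x) := by rw [hF, hF, hzx, hzy]; ac_rfl
    _ = (G (z ∘ Equiv.swap p q) * H (z ∘ Equiv.swap p q)) * (G y * H x) := by
        rw [← hF, ← hF, hswap]
    _ = F (update x p (y q)) * F (update y q (x p)) := by
        rw [hzG, hzH, hF, hF, hxH, hyG]; ac_rfl

end Exchange

theorem stmt_1_general {D : Type*} (r s : ℕ) (hr : 1 ≤ r) (hs : 1 ≤ s)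
    (F : (Fin (r + s) → D) → ℂ) (A : (Fin r → D) → ℂ) (B : (Fin s → D) → ℂ)
    (hsym : ∀ (σ : Equiv.Perm (Fin (r + s))) (x : Fin (r + s) → D), F (x ∘ σ) = F x)
    (hfac : ∀ x : Fin (r + s) → D,
      F x = A (fun i => x (Fin.castAdd s i)) * B (fun j => x (Fin.natAdd r j))) :
    ∃ (c : ℂ) (C : D → ℂ), ∀ x : Fin (r + s) → D, F x = c * ∏ i, C (x i) := by
  by_cases hF : ∀ x, F x = 0
  · exact ⟨0, fun _ => 1, fun x => by simp [hF x]⟩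
  obtain ⟨x₀, hx₀⟩ := not_forall.mp hF
  set p := Fin.castAdd s (⟨0, hr⟩ : Fin r)
  set q := Fin.natAdd r (⟨0, hs⟩ : Fin s)
  have hex := mul_eq_mul_update_of_eq_mul (S := {i : Fin (r + s) | (i : ℕ) < r}) (p := p)
    (q := q) hfac (fun x y h => congrArg A (funext fun i => h (by simp)))
    (fun x y h => congrArg B (funext fun j => h (by simp))) (hsym _) (by simp [p]; omega)
    (by simp [q])
  set C : D → ℂ := fun a => F (update x₀ q a)
  have hupd : ∀ x i d, F (update x i d) * C (x i) = F x * C d :=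
    update_mul_eq_of_perm_invariant hsym p (update_mul_eq_of_exchange p q hex x₀)
  have hC : C (x₀ q) ≠ 0 := by simpa [C] using hx₀
  refine ⟨F (fun _ => x₀ q) / C (x₀ q) ^ (r + s), C, fun x => ?_⟩
  have h := mul_pow_card_eq_of_update_mul hupd (x₀ q) x
  rw [Fintype.card_fin] at h
  field_simp
  linear_combination h

/-- If a symmetric function of arity `r + s` (with `r, s ≥ 1`) on a finite
domain decomposes as a product of a function of the first `r` variables and a
function of the last `s` variables, then it is a constant times a tensor power
of a unary function. -/
theorem stmt_1 {D : Type*} [Fintype D] (r s : ℕ) (hr : 1 ≤ r) (hs : 1 ≤ s)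
    (F : (Fin (r + s) → D) → ℂ) (A : (Fin r → D) → ℂ) (B : (Fin s → D) → ℂ)
    (hsym : ∀ (σ : Equiv.Perm (Fin (r + s))) (x : Fin (r + s) → D), F (x ∘ σ) = F x)
    (hfac : ∀ x : Fin (r + s) → D,
      F x = A (fun i => x (Fin.castAdd s i)) * B (fun j => x (Fin.natAdd r j))) :
    ∃ (c : ℂ) (C : D → ℂ), ∀ x : Fin (r + s) → D, F x = c * ∏ i, C (x i) :=
  stmt_1_general r s hr hs F A B hsym hfac
end

section
/- Let F : D^4 → ℂ satisfy F(x1,x2,y1,y2) = F(x2,x1,y1,y2) = F(x1,x2,y2,y1). If F(x1,x2,y1,y2) = A(x1)·B(x2,y1,y2) for some unary A and ternary B, then there exist binary functions C and E with F(x1,x2,y1,y2) = C(x1,x2)·E(y1,y2). -/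
/-!
If `A` vanishes identically, so does `F`. Otherwise fix `a` with `A a ≠ 0`. Swapping the first
two arguments of `F (a, x₂, y) = A a · B (x₂, y)` gives `A a · B (x₂, y) = A x₂ · B (a, y)`, so
`F (x₁, x₂, y) = (A x₁ · A x₂ / A a) · B (a, y)`: the `y`-dependence is carried by `B (a, ·)` alone.
-/

section SymmetricFactorization

variable {α β K : Type*} {F : α → α → β → K} {A : α → K} {B : α → β → K}

theorem mul_apply_eq_of_symm_of_eq_mul [CommSemiring K]
    (hsym : ∀ x₁ x₂ y, F x₁ x₂ y = F x₂ x₁ y) (hfac : ∀ x₁ x₂ y, F x₁ x₂ y = A x₁ * B x₂ y)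
    (a x₁ x₂ : α) (y : β) : A a * F x₁ x₂ y = A x₁ * A x₂ * B a y := by
  have hswap : A a * B x₂ y = A x₂ * B a y := by rw [← hfac, hsym, hfac]
  calc A a * F x₁ x₂ y = A x₁ * (A a * B x₂ y) := by rw [hfac]; ring
    _ = A x₁ * A x₂ * B a y := by rw [hswap]; ring

theorem exists_eq_mul_of_symm_of_eq_mul [Field K]
    (hsym : ∀ x₁ x₂ y, F x₁ x₂ y = F x₂ x₁ y) (hfac : ∀ x₁ x₂ y, F x₁ x₂ y = A x₁ * B x₂ y) :
    ∃ (C : α → α → K) (E : β → K), ∀ x₁ x₂ y, F x₁ x₂ y = C x₁ x₂ * E y := by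
  by_cases hA : ∃ a, A a ≠ 0
  · obtain ⟨a, ha⟩ := hA
    refine ⟨fun x₁ x₂ => A x₁ * A x₂ / A a, B a, fun x₁ x₂ y => ?_⟩
    rw [div_mul_eq_mul_div, eq_div_iff ha, mul_comm,
      mul_apply_eq_of_symm_of_eq_mul hsym hfac]
  · push Not at hA
    exact ⟨0, 0, fun x₁ x₂ y => by simp [hfac, hA]⟩

end SymmetricFactorization

theorem stmt_2_general {D : Type*}
    (F : D → D → D → D → ℂ) (A : D → ℂ) (B : D → D → D → ℂ)
    (hsym1 : ∀ x1 x2 y1 y2, F x1 x2 y1 y2 = F x2 x1 y1 y2)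
    (hfac : ∀ x1 x2 y1 y2, F x1 x2 y1 y2 = A x1 * B x2 y1 y2) :
    ∃ (C E : D → D → ℂ), ∀ x1 x2 y1 y2, F x1 x2 y1 y2 = C x1 x2 * E y1 y2 := by
  obtain ⟨C, E, hCE⟩ := exists_eq_mul_of_symm_of_eq_mul
    (F := fun x1 x2 (y : D × D) => F x1 x2 y.1 y.2) (B := fun x2 y => B x2 y.1 y.2)
    (fun x1 x2 y => hsym1 x1 x2 y.1 y.2) (fun x1 x2 y => hfac x1 x2 y.1 y.2)
  exact ⟨C, fun y1 y2 => E (y1, y2), fun x1 x2 y1 y2 => hCE x1 x2 (y1, y2)⟩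

/-- Partial symmetry decomposition: if `F(x₁,x₂,y₁,y₂)` is symmetric in the
pair `(x₁,x₂)` and in the pair `(y₁,y₂)`, and `F = A(x₁)·B(x₂,y₁,y₂)`, then
`F = C(x₁,x₂)·E(y₁,y₂)` for some binary functions `C, E`. -/
theorem stmt_2 {D : Type*} [Fintype D]
    (F : D → D → D → D → ℂ) (A : D → ℂ) (B : D → D → D → ℂ)
    (hsym1 : ∀ x1 x2 y1 y2, F x1 x2 y1 y2 = F x2 x1 y1 y2)
    (hsym2 : ∀ x1 x2 y1 y2, F x1 x2 y1 y2 = F x1 x2 y2 y1)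
    (hfac : ∀ x1 x2 y1 y2, F x1 x2 y1 y2 = A x1 * B x2 y1 y2) :
    ∃ (C E : D → D → ℂ), ∀ x1 x2 y1 y2, F x1 x2 y1 y2 = C x1 x2 * E y1 y2 :=
  stmt_2_general F A B hsym1 hfac
end

section
/- Every 3×3 complex orthogonal matrix T satisfying T·β₀ = β₀, where β₀ = (1/√2)·(1, i, 0)ᵀ, has the form T = [[1+y²/2, i·y²/2, i·y], [i·y²/2, 1−y²/2, −y], [i·y, −y, −1]] for some y ∈ ℂ, or the same matrix with the third column negated. -/
/-!
Rescaling `β₀` by `√2` turns the hypothesis into `T u = u` for `u = (1, i, 0)`, i.e. every row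
`r` of `T` satisfies `r₀ + i r₁ = uᵣ`. Write `y = -T₂₁` and `ε = T₂₂`; the row relation gives
`T₂₀ = i y`. Since `T Tᵀ = 1`, the rows are orthonormal for the bilinear dot product, and these
relations can be solved one at a time: the norm of the third row gives `ε² = 1` (because
`(i y)² + y² = 0`), its products with the first two rows give the third column, and the norms of
the first two rows give the remaining entries. The two shapes of the theorem are `ε = -1` and
`ε = 1`.
-/

open Matrix Complex

noncomputable def nullRotation (y ε : ℂ) : Matrix (Fin 3) (Fin 3) ℂ :=
  !![1 + y ^ 2 / 2, I * y ^ 2 / 2, -(ε * (I * y));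
     I * y ^ 2 / 2, 1 - y ^ 2 / 2, ε * y;
     I * y, -y, ε]

lemma Matrix.mul_transpose_apply_fin_three {R : Type*} [NonUnitalNonAssocSemiring R]
    (A : Matrix (Fin 3) (Fin 3) R) (i j : Fin 3) :
    (A * Aᵀ) i j = A i 0 * A j 0 + A i 1 * A j 1 + A i 2 * A j 2 := by
  simp [mul_apply, Fin.sum_univ_three]

lemma Matrix.mulVec_fin_three_apply {R : Type*} [NonUnitalNonAssocSemiring R]
    (A : Matrix (Fin 3) (Fin 3) R) (a b c : R) (i : Fin 3) :
    (A *ᵥ ![a, b, c]) i = A i 0 * a + A i 1 * b + A i 2 * c := by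
  simp [mulVec, dotProduct, Fin.sum_univ_three]

theorem exists_eq_nullRotation {T : Matrix (Fin 3) (Fin 3) ℂ} (horth : T * Tᵀ = 1)
    (hfix : T *ᵥ ![1, I, 0] = ![1, I, 0]) :
    ∃ y ε : ℂ, ε ^ 2 = 1 ∧ T = nullRotation y ε := by
  have row (i : Fin 3) : T i 0 + I * T i 1 = ![1, I, 0] i := by
    simpa [mulVec_fin_three_apply, mul_comm] using congrFun hfix i
  have orth (i j : Fin 3) : T i 0 * T j 0 + T i 1 * T j 1 + T i 2 * T j 2 = (1 : Matrix _ _ ℂ) i j :=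
    mul_transpose_apply_fin_three T i j ▸ congrFun (congrFun horth i) j
  have r0 := row 0; have r1 := row 1; have r2 := row 2
  have o00 := orth 0 0; have o11 := orth 1 1; have o22 := orth 2 2
  have o02 := orth 0 2; have o12 := orth 1 2
  simp only [Fin.isValue, cons_val_zero, cons_val_one, cons_val_two, tail_cons, head_cons,
    one_apply_eq, ne_eq, Fin.reduceEq, not_false_eq_true, one_apply_ne] at r0 r1 r2 o00 o11 o22 o02 o12
  have hε : T 2 2 ^ 2 = 1 := by
    linear_combination (norm := (ring_nf; simp only [I_sq]; ring_nf))
      o22 - (T 2 0 - I * T 2 1) * r2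
  have h20 : T 2 0 = I * -T 2 1 := by linear_combination r2
  have h02 : T 0 2 = -(T 2 2 * (I * -T 2 1)) := by
    linear_combination (norm := (ring_nf; simp only [I_sq]; ring_nf))
      T 2 2 * (o02 - T 0 0 * r2 + I * T 2 1 * r0) - T 0 2 * hε
  have h12 : T 1 2 = T 2 2 * -T 2 1 := by
    linear_combination (norm := (ring_nf; simp only [I_sq]; ring_nf))
      T 2 2 * (o12 - T 1 0 * r2 + I * T 2 1 * r1) - T 1 2 * hε
  have h01 : T 0 1 = I * (-T 2 1) ^ 2 / 2 := by
    linear_combination (norm := (ring_nf; simp only [I_sq, I_pow_three]; ring_nf))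
      I / 2 * (o00 - (T 0 0 + 1 - I * T 0 1) * r0 - (T 0 2 + T 2 2 * I * T 2 1) * h02) +
        I / 2 * T 2 1 ^ 2 * hε
  have h11 : T 1 1 = 1 - (-T 2 1) ^ 2 / 2 := by
    linear_combination (norm := (ring_nf; simp only [I_sq]; ring_nf))
      (o11 - (T 1 0 + I - I * T 1 1) * r1 - (T 1 2 - T 2 2 * T 2 1) * h12 - T 2 1 ^ 2 * hε) / 2
  have h00 : T 0 0 = 1 + (-T 2 1) ^ 2 / 2 := by
    linear_combination (norm := (ring_nf; simp only [I_sq]; ring_nf)) r0 - I * h01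
  have h10 : T 1 0 = I * (-T 2 1) ^ 2 / 2 := by linear_combination r1 - I * h11
  refine ⟨-T 2 1, T 2 2, hε, ?_⟩
  ext i j
  fin_cases i <;> fin_cases j <;> simp [nullRotation, *]

/-- Every complex orthogonal `3×3` matrix fixing `β₀ = (1/√2)(1, i, 0)ᵀ` has
the explicit one-parameter form (or the same with the third column negated). -/
theorem stmt_7 (T : Matrix (Fin 3) (Fin 3) ℂ)
    (horth : T * Tᵀ = 1)
    (hfix : T.mulVec ![(Real.sqrt 2 : ℂ)⁻¹, Complex.I * (Real.sqrt 2 : ℂ)⁻¹, 0]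
      = ![(Real.sqrt 2 : ℂ)⁻¹, Complex.I * (Real.sqrt 2 : ℂ)⁻¹, 0]) :
    ∃ y : ℂ,
      T = !![1 + y ^ 2 / 2, Complex.I * y ^ 2 / 2, Complex.I * y;
             Complex.I * y ^ 2 / 2, 1 - y ^ 2 / 2, -y;
             Complex.I * y, -y, -1] ∨
      T = !![1 + y ^ 2 / 2, Complex.I * y ^ 2 / 2, -(Complex.I * y);
             Complex.I * y ^ 2 / 2, 1 - y ^ 2 / 2, y;
             Complex.I * y, -y, 1] := by
  have hβ₀ : ![(Real.sqrt 2 : ℂ)⁻¹, I * (Real.sqrt 2 : ℂ)⁻¹, 0] =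
      (Real.sqrt 2 : ℂ)⁻¹ • ![1, I, 0] := by
    ext i; fin_cases i <;> simp [mul_comm]
  have hs : (Real.sqrt 2 : ℂ)⁻¹ ≠ 0 := by simp
  rw [hβ₀, mulVec_smul] at hfix
  obtain ⟨y, ε, hε, rfl⟩ := exists_eq_nullRotation horth (smul_right_injective _ hs hfix)
  refine ⟨y, ?_⟩
  rcases sq_eq_one_iff.mp hε with rfl | rfl
  · right; ext i j; fin_cases i <;> fin_cases j <;> simp [nullRotation]
  · left; ext i j; fin_cases i <;> fin_cases j <;> simp [nullRotation]
end

section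
/- If β₁, β₂ ∈ ℂ^3 are both isotropic (⟨β_j, β_j⟩ = 0) and linearly independent, then ⟨β₁, β₂⟩ ≠ 0, and there exists a complex orthogonal 3×3 matrix T such that T·β₁ = β₀ and T·β₂ = ⟨β₁,β₂⟩·β̄₀, where β₀ = (1/√2)(1,i,0)ᵀ and β̄₀ = (1/√2)(1,−i,0)ᵀ. -/
open Matrix Complex

/-! If `⟨β₁, β₂⟩ = 0`, then `w = β₁ × β₂` is nonzero by linear independence, while the
triple product expansion gives `w × β₁ = w × β₂ = 0`; so `β₁, β₂` are both multiples of `w` and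
`β₁ × β₂ = 0`, a contradiction.

Otherwise put `c = ⟨β₁, β₂⟩`, `e = c⁻¹ β₂` and `s = 1/√2`. The rows `s(β₁ + e)`, `-is(β₁ - e)`
and `i(β₁ × e)` are orthonormal for the bilinear form, since `⟨β₁, e⟩ = 1` and
`⟨β₁ × e, β₁ × e⟩ = -⟨β₁, e⟩² = -1`; the matrix with these rows maps `β₁ ↦ β₀` and `e ↦ β̄₀`. -/

section

variable {α : Type*} [NonUnitalNonAssocSemiring α]

theorem of_mul_transpose_of_apply {m n : Type*} [Fintype n] (r : m → n → α) (i j : m) :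
    (of r * (of r)ᵀ) i j = r i ⬝ᵥ r j := rfl

theorem of_mulVec_apply {m n : Type*} [Fintype n] (r : m → n → α) (u : n → α) (i : m) :
    (of r *ᵥ u) i = r i ⬝ᵥ u := rfl

end

section

variable {K : Type*} [Field K]

theorem exists_smul_eq_of_cross_eq_zero {w u : Fin 3 → K} (hw : w ≠ 0) (h : w ⨯₃ u = 0) :
    ∃ a : K, a • w = u := by
  by_contra! hne
  exact crossProduct_ne_zero_iff_linearIndependent.mpr ((LinearIndependent.pair_iff' hw).mpr hne)
    h

theorem cross_eq_zero_of_isotropic {u v : Fin 3 → K} (hu : u ⬝ᵥ u = 0) (hv : v ⬝ᵥ v = 0)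
    (huv : u ⬝ᵥ v = 0) : u ⨯₃ v = 0 := by
  set w := u ⨯₃ v
  by_contra hw
  obtain ⟨a, ha⟩ := exists_smul_eq_of_cross_eq_zero (u := u) hw <| by
    simp [w, cross_cross_eq_smul_sub_smul, hu, dotProduct_comm v u, huv]
  obtain ⟨b, hb⟩ := exists_smul_eq_of_cross_eq_zero (u := v) hw <| by
    simp [w, cross_cross_eq_smul_sub_smul, hv, huv]
  apply hw
  calc w = (a • w) ⨯₃ (b • w) := by rw [ha, hb]
    _ = 0 := by simp [cross_self]

theorem dotProduct_ne_zero_of_isotropic {u v : Fin 3 → K} (hu : u ⬝ᵥ u = 0) (hv : v ⬝ᵥ v = 0)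
    (hind : LinearIndependent K ![u, v]) : u ⬝ᵥ v ≠ 0 := fun huv =>
  crossProduct_ne_zero_iff_linearIndependent.mpr hind (cross_eq_zero_of_isotropic hu hv huv)

end

theorem exists_mul_transpose_eq_one_of_isotropic_dual {R : Type*} [CommRing R] {i s : R}
    (hi : i * i = -1) (hs : 2 * (s * s) = 1) {u e : Fin 3 → R} (hu : u ⬝ᵥ u = 0)
    (he : e ⬝ᵥ e = 0) (hue : u ⬝ᵥ e = 1) :
    ∃ T : Matrix (Fin 3) (Fin 3) R, T * Tᵀ = 1 ∧
      T *ᵥ u = ![s, i * s, 0] ∧ T *ᵥ e = ![s, -(i * s), 0] := by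
  have heu : e ⬝ᵥ u = 1 := dotProduct_comm e u ▸ hue
  have hwu : u ⨯₃ e ⬝ᵥ u = 0 := by rw [dotProduct_comm, dot_self_cross]
  have hwe : u ⨯₃ e ⬝ᵥ e = 0 := by rw [dotProduct_comm, dot_cross_self]
  have hww : u ⨯₃ e ⬝ᵥ u ⨯₃ e = -1 := by rw [cross_dot_cross, hu, he, hue, heu]; ring
  refine ⟨of ![s • (u + e), (-i * s) • (u - e), i • u ⨯₃ e], ?_, ?_, ?_⟩
  · ext j k
    rw [of_mul_transpose_of_apply]
    fin_cases j <;> fin_cases k <;>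
      simp only [Fin.isValue, Fin.zero_eta, Fin.mk_one, Fin.reduceFinMk, cons_val_zero,
        cons_val_one, cons_val, one_apply, Fin.reduceEq, zero_ne_one, one_ne_zero, ↓reduceIte,
        smul_add, neg_mul, neg_smul, smul_eq_mul, dotProduct_add, add_dotProduct, dotProduct_sub,
        sub_dotProduct, dotProduct_neg, neg_dotProduct, dotProduct_smul, smul_dotProduct,
        hu, he, hue, heu, hwu, hwe, hww, dot_self_cross, dot_cross_self]
    all_goals first
      | ring1
      | linear_combination hs
      | linear_combination -hi
      | linear_combination hs - 2 * s * s * hi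
  · ext j
    rw [of_mulVec_apply]
    fin_cases j <;>
      simp [add_dotProduct, sub_dotProduct, smul_dotProduct, hu, heu, hwu]
  · ext j
    rw [of_mulVec_apply]
    fin_cases j <;>
      simp [add_dotProduct, sub_dotProduct, smul_dotProduct, he, hue, hwe]

theorem exists_mul_transpose_eq_one_of_isotropic {K : Type*} [Field K] {i s : K}
    (hi : i * i = -1) (hs : 2 * (s * s) = 1) {u v : Fin 3 → K} (hu : u ⬝ᵥ u = 0) (hv : v ⬝ᵥ v = 0)
    (huv : u ⬝ᵥ v ≠ 0) :
    ∃ T : Matrix (Fin 3) (Fin 3) K, T * Tᵀ = 1 ∧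
      T *ᵥ u = ![s, i * s, 0] ∧ T *ᵥ v = (u ⬝ᵥ v) • ![s, -(i * s), 0] := by
  obtain ⟨T, hT, hTu, hTe⟩ := exists_mul_transpose_eq_one_of_isotropic_dual hi hs hu
    (e := (u ⬝ᵥ v)⁻¹ • v) (by simp [hv]) (by simp [huv])
  refine ⟨T, hT, hTu, ?_⟩
  rw [← hTe, mulVec_smul, smul_inv_smul₀ huv]

/-- Two linearly independent isotropic vectors in `ℂ³` have nonzero bilinear
inner product, and there is a complex orthogonal `T` sending `β₁` to `β₀` and
`β₂` to `⟨β₁,β₂⟩·β̄₀`, where `β₀ = (1/√2)(1,i,0)ᵀ`. -/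
theorem stmt_8 (β₁ β₂ : Fin 3 → ℂ)
    (hiso1 : (∑ i, β₁ i * β₁ i) = 0) (hiso2 : (∑ i, β₂ i * β₂ i) = 0)
    (hind : LinearIndependent ℂ ![β₁, β₂]) :
    (∑ i, β₁ i * β₂ i) ≠ 0 ∧
    ∃ T : Matrix (Fin 3) (Fin 3) ℂ, T * Tᵀ = 1 ∧
      T.mulVec β₁ = ![(Real.sqrt 2 : ℂ)⁻¹, Complex.I * (Real.sqrt 2 : ℂ)⁻¹, 0] ∧
      T.mulVec β₂ = (∑ i, β₁ i * β₂ i) •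
        ![(Real.sqrt 2 : ℂ)⁻¹, -(Complex.I * (Real.sqrt 2 : ℂ)⁻¹), 0] := by
  have hc : β₁ ⬝ᵥ β₂ ≠ 0 := dotProduct_ne_zero_of_isotropic hiso1 hiso2 hind
  have hs : 2 * ((Real.sqrt 2 : ℂ)⁻¹ * (Real.sqrt 2 : ℂ)⁻¹) = 1 := by
    rw [← mul_inv, ← ofReal_mul, Real.mul_self_sqrt zero_le_two]
    norm_num
  exact ⟨hc, exists_mul_transpose_eq_one_of_isotropic I_mul_I hs hiso1 hiso2 hc⟩
end

section
/- Suppose β ∈ ℂ^3 is isotropic, γ ∈ ℂ^3 is not isotropic, {β, γ} is linearly independent, and ⟨β, γ⟩ = 0. Then there exists a complex orthogonal 3×3 matrix T with T·β = β₀ = (1/√2)(1,i,0)ᵀ and T·γ = √⟨γ,γ⟩ · e₃, where e₃ = (0,0,1)ᵀ. -/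
/-!
Complete the isotropic vector `β` to a hyperbolic pair `(β, δ)` orthogonal to `γ`: starting from
any `d` with `β ⬝ᵥ d = 1`, project away its `γ`-component and then subtract a multiple of `β` to make
it isotropic. The rows `δ, β, γ / √⟨γ,γ⟩` then have Gram matrix `G = !![0,1,0; 1,0,0; 0,0,1]`, and
`T` is this row matrix followed by the fixed matrix `A = isotropicFrame`, whose columns `β₀, β̄₀, e₃`
satisfy `A G Aᵀ = 1`.
-/

open Matrix Complex

namespace Matrix

variable {K n : Type*} [Field K] [Fintype n]

lemma exists_dotProduct_eq_one {β : n → K} (hβ : β ≠ 0) : ∃ d, β ⬝ᵥ d = 1 := by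
  classical
  obtain ⟨i, hi⟩ := Function.ne_iff.mp hβ
  exact ⟨Pi.single i (β i)⁻¹, by simpa using mul_inv_cancel₀ hi⟩

lemma exists_isotropic_dotProduct_eq_one_of_orthogonal [NeZero (2 : K)] {β γ : n → K}
    (hβ : β ≠ 0) (hββ : β ⬝ᵥ β = 0) (hγγ : γ ⬝ᵥ γ ≠ 0) (hβγ : β ⬝ᵥ γ = 0) :
    ∃ δ, β ⬝ᵥ δ = 1 ∧ δ ⬝ᵥ δ = 0 ∧ δ ⬝ᵥ γ = 0 := by
  obtain ⟨d, hd⟩ := exists_dotProduct_eq_one hβ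
  set d' := d - ((d ⬝ᵥ γ) / (γ ⬝ᵥ γ)) • γ
  have hβd' : β ⬝ᵥ d' = 1 := by simp [d', dotProduct_sub, hd, hβγ]
  have hd'γ : d' ⬝ᵥ γ = 0 := by simp [d', sub_dotProduct, hγγ]
  refine ⟨d' - ((d' ⬝ᵥ d') / 2) • β, ?_, ?_, ?_⟩
  · simp [dotProduct_sub, hβd', hββ]
  · simp only [dotProduct_sub, sub_dotProduct, smul_dotProduct, dotProduct_smul, smul_eq_mul,
      dotProduct_comm d' β, hβd', hββ, mul_one, mul_zero, sub_zero]
    field_simp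
    ring
  · simp [sub_dotProduct, hd'γ, hβγ]

lemma of_mul_transpose_of {m : Type*} (v : m → n → K) :
    of v * (of v)ᵀ = of fun i j => v i ⬝ᵥ v j := rfl

lemma of_vec3_mulVec (u v w x : n → K) : of ![u, v, w] *ᵥ x = ![u ⬝ᵥ x, v ⬝ᵥ x, w ⬝ᵥ x] := by
  ext i; fin_cases i <;> rfl

lemma of_vec3_mul_transpose_eq {δ β ε : n → K} (hδδ : δ ⬝ᵥ δ = 0) (hβδ : β ⬝ᵥ δ = 1)
    (hββ : β ⬝ᵥ β = 0) (hδε : δ ⬝ᵥ ε = 0) (hβε : β ⬝ᵥ ε = 0) (hεε : ε ⬝ᵥ ε = 1) :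
    of ![δ, β, ε] * (of ![δ, β, ε])ᵀ = !![0, 1, 0; 1, 0, 0; 0, 0, 1] := by
  rw [of_mul_transpose_of]
  ext i j
  fin_cases i <;> fin_cases j <;>
    simp [dotProduct_comm ε, dotProduct_comm δ β, hδδ, hβδ, hββ, hδε, hβε, hεε]

end Matrix

noncomputable def isotropicFrame : Matrix (Fin 3) (Fin 3) ℂ :=
  let s : ℂ := (Real.sqrt 2 : ℂ)⁻¹
  !![s, s, 0; I * s, -(I * s), 0; 0, 0, 1]

lemma isotropicFrame_mul_mul_transpose :
    isotropicFrame * !![0, 1, 0; 1, 0, 0; 0, 0, 1] * isotropicFrameᵀ = 1 := by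
  have hs : ((Real.sqrt 2 : ℂ)⁻¹) * (Real.sqrt 2 : ℂ)⁻¹ = 2⁻¹ := by
    rw [← mul_inv, ← ofReal_mul, Real.mul_self_sqrt zero_le_two, ofReal_ofNat]
  ext i j
  fin_cases i <;> fin_cases j <;>
    simp [isotropicFrame, mul_apply, Fin.sum_univ_three, hs, mul_mul_mul_comm I, ← two_mul]

lemma isotropicFrame_mulVec_e₁ :
    isotropicFrame *ᵥ ![1, 0, 0] = ![(Real.sqrt 2 : ℂ)⁻¹, I * (Real.sqrt 2 : ℂ)⁻¹, 0] := by
  ext i; fin_cases i <;> simp [isotropicFrame, mulVec, dotProduct, Fin.sum_univ_three]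

lemma isotropicFrame_mulVec_e₃ (r : ℂ) : isotropicFrame *ᵥ ![0, 0, r] = r • ![0, 0, 1] := by
  ext i; fin_cases i <;> simp [isotropicFrame, mulVec, dotProduct, Fin.sum_univ_three]

/-- If `β ∈ ℂ³` is isotropic, `γ ∈ ℂ³` is not isotropic, `{β, γ}` is linearly
independent and `⟨β,γ⟩ = 0`, then some complex orthogonal `T` sends `β` to
`β₀ = (1/√2)(1,i,0)ᵀ` and `γ` to `√⟨γ,γ⟩·e₃` (for a square root of `⟨γ,γ⟩`). -/
theorem stmt_9 (β γ : Fin 3 → ℂ)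
    (hiso : (∑ i, β i * β i) = 0) (hniso : (∑ i, γ i * γ i) ≠ 0)
    (hind : LinearIndependent ℂ ![β, γ])
    (horth : (∑ i, β i * γ i) = 0) :
    ∃ (T : Matrix (Fin 3) (Fin 3) ℂ) (r : ℂ),
      T * Tᵀ = 1 ∧ r ^ 2 = (∑ i, γ i * γ i) ∧
      T.mulVec β = ![(Real.sqrt 2 : ℂ)⁻¹, Complex.I * (Real.sqrt 2 : ℂ)⁻¹, 0] ∧
      T.mulVec γ = r • ![0, 0, 1] := by
  obtain ⟨r, hr⟩ := IsAlgClosed.exists_pow_nat_eq (γ ⬝ᵥ γ) two_pos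
  have hr0 : r ≠ 0 := by rintro rfl; exact hniso (by simpa using hr.symm : γ ⬝ᵥ γ = 0)
  have hβ : β ≠ 0 := by simpa using hind.ne_zero 0
  have hββ : β ⬝ᵥ β = 0 := hiso
  have hβγ : β ⬝ᵥ γ = 0 := horth
  obtain ⟨δ, hβδ, hδδ, hδγ⟩ := exists_isotropic_dotProduct_eq_one_of_orthogonal hβ hββ hniso hβγ
  set ε := r⁻¹ • γ with hε
  have hεγ : ε ⬝ᵥ γ = r := by rw [hε, smul_dotProduct, ← hr, smul_eq_mul]; field_simp
  have hεε : ε ⬝ᵥ ε = 1 := by rw [dotProduct_smul, hεγ, smul_eq_mul, inv_mul_cancel₀ hr0]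
  have hβε : β ⬝ᵥ ε = 0 := by simp [hε, hβγ]
  have hBB := of_vec3_mul_transpose_eq hδδ hβδ hββ (by simp [hε, hδγ]) hβε hεε
  refine ⟨isotropicFrame * of ![δ, β, ε], r, ?_, hr, ?_, ?_⟩
  · rw [transpose_mul, Matrix.mul_assoc, ← Matrix.mul_assoc (of _), hBB,
      ← Matrix.mul_assoc, isotropicFrame_mul_mul_transpose]
  · rw [← mulVec_mulVec, of_vec3_mulVec, dotProduct_comm δ, dotProduct_comm ε, hβδ, hββ, hβε,
      isotropicFrame_mulVec_e₁]
  · rw [← mulVec_mulVec, of_vec3_mulVec, hδγ, hβγ, hεγ, isotropicFrame_mulVec_e₃]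
end

section
/- Let X, Y, Z be three linearly independent complex symmetric 3×3 matrices. Then there exist coefficients x, y, z ∈ ℂ such that xX + yY + zZ has rank exactly 2. -/
/-!
Over an algebraically closed field every pencil `c • B - A` with `B` invertible has a singular
member, so the span of `X, Y, Z` contains two independent singular matrices `A, B`; being
`3 × 3`, each has rank at most `2`. If neither has rank `2`, both are symmetric of rank at most
`1`, hence of the form `w wᵀ` (a square root absorbs the scalar), the two vectors `w` are
independent, and `A + B = Wᵀ W` with `W` of rank `2` has rank `2`.
-/

open Matrix Submodule

theorem LinearIndependent.eq_zero_of_triple {R M : Type*} [Ring R] [AddCommGroup M] [Module R M]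
    {x y z : M} (h : LinearIndependent R ![x, y, z]) {a b c : R}
    (habc : a • x + b • y + c • z = 0) : a = 0 ∧ b = 0 ∧ c = 0 := by
  have h0 := Fintype.linearIndependent_iff.mp h ![a, b, c]
    (by simpa [Fin.sum_univ_three] using habc)
  exact ⟨h0 0, h0 1, h0 2⟩

namespace Matrix

variable {K n : Type*} [Field K]

theorem isSymm_of_mem_span {s : Set (Matrix n n K)} (hs : ∀ M ∈ s, M.IsSymm)
    {M : Matrix n n K} (hM : M ∈ span K s) : M.IsSymm := by
  induction hM using span_induction with
  | mem A hA => exact hs A hA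
  | zero => exact isSymm_zero
  | add A B _ _ hA hB => exact hA.add hB
  | smul c A _ hA => exact hA.smul c

theorem linearIndependent_of_vecMulVec_self {v w : n → K}
    (h : LinearIndependent K ![vecMulVec v v, vecMulVec w w]) : LinearIndependent K ![v, w] := by
  refine LinearIndependent.pair_iff.mpr fun s t hst ↦ ?_
  have hsq : (s ^ 2) • vecMulVec v v + (-t ^ 2) • vecMulVec w w = 0 := by
    ext i j
    have hi := congrFun hst i
    have hj := congrFun hst j
    simp only [Pi.add_apply, Pi.smul_apply, smul_eq_mul, Pi.zero_apply] at hi hj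
    simp only [add_apply, smul_apply, vecMulVec_apply, smul_eq_mul, zero_apply]
    linear_combination (s * v j) * hi - (t * w i) * hj
  obtain ⟨hs, ht⟩ := h.eq_zero_of_pair hsq
  exact ⟨pow_eq_zero_iff two_ne_zero |>.mp hs,
    pow_eq_zero_iff two_ne_zero |>.mp (neg_eq_zero.mp ht)⟩

variable [Fintype n]

theorem exists_eq_vecMulVec_of_rank_le_one {m : Type*} {M : Matrix m n K} (h : M.rank ≤ 1) :
    ∃ u : m → K, ∃ v : n → K, M = vecMulVec u v := by
  obtain ⟨u, hu⟩ := finrank_le_one_iff.mp h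
  choose v hv using fun j : n ↦ hu ⟨M.col j, by classical exact ⟨Pi.single j 1, by simp⟩⟩
  refine ⟨u, v, ?_⟩
  ext i j
  simpa [vecMulVec_apply, mul_comm] using (congrFun (congrArg Subtype.val (hv j)) i).symm

theorem IsSymm.exists_eq_vecMulVec_self [IsAlgClosed K] {M : Matrix n n K} (hM : M.IsSymm)
    (h : M.rank ≤ 1) : ∃ w : n → K, M = vecMulVec w w := by
  obtain ⟨u, v, rfl⟩ := exists_eq_vecMulVec_of_rank_le_one h
  by_cases hv : v = 0
  · exact ⟨0, by simp [hv]⟩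
  obtain ⟨i, hi⟩ : ∃ i, v i ≠ 0 := Function.ne_iff.mp hv
  obtain ⟨r, hr⟩ := IsAlgClosed.exists_eq_mul_self (u i / v i)
  have hu : u = (u i / v i) • v := by
    funext j
    have hij := congrFun (congrFun hM i) j
    simp only [transpose_apply, vecMulVec_apply] at hij
    simp only [Pi.smul_apply, smul_eq_mul]
    field_simp
    linear_combination hij
  refine ⟨r • v, ?_⟩
  ext j k
  rw [hu, hr]
  simp only [vecMulVec_apply, Pi.smul_apply, smul_eq_mul]
  ring

theorem rank_vecMulVec_self_add_vecMulVec_self {v w : n → K} (h : LinearIndependent K ![v, w]) :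
    (vecMulVec v v + vecMulVec w w).rank = 2 := by
  let W : Matrix (Fin 2) n K := of ![v, w]
  have hW : W.rank = 2 := by simpa using h.rank_matrix (M := W)
  have hrange : LinearMap.range W.mulVecLin = ⊤ :=
    eq_top_of_finrank_eq (by rw [Module.finrank_fin_fun]; exact hW)
  have hfac : vecMulVec v v + vecMulVec w w = Wᵀ * W := by
    ext i j
    simp [W, mul_apply, Fin.sum_univ_two, vecMulVec_apply]
  rw [hfac]
  change Module.finrank K (LinearMap.range (Wᵀ * W).mulVecLin) = 2
  rw [mulVecLin_mul, LinearMap.range_comp_of_range_eq_top _ hrange]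
  exact (rank_transpose W).trans hW

variable [DecidableEq n]

theorem rank_lt_card_of_det_eq_zero {M : Matrix n n K} (h : M.det = 0) :
    M.rank < Fintype.card n := by
  refine (rank_le_card_width M).lt_of_ne fun hrank ↦ ?_
  have hrange : LinearMap.range M.mulVecLin = ⊤ :=
    eq_top_of_finrank_eq (by rw [Module.finrank_fintype_fun_eq_card]; exact hrank)
  have hunit : IsUnit M := mulVec_surjective_iff_isUnit.mp (LinearMap.range_eq_top.mp hrange)
  exact (isUnit_iff_isUnit_det M).mp hunit |>.ne_zero h

theorem exists_det_smul_sub_eq_zero [IsAlgClosed K] [Nonempty n] (A : Matrix n n K)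
    {B : Matrix n n K} (hB : B.det ≠ 0) : ∃ c : K, (c • B - A).det = 0 := by
  obtain ⟨c, hc⟩ := spectrum.nonempty_of_isAlgClosed_of_finiteDimensional K (A * B⁻¹)
  have hfac : c • B - A = (algebraMap K (Matrix n n K) c - A * B⁻¹) * B := by
    rw [sub_mul, Algebra.algebraMap_eq_smul_one, smul_mul_assoc, one_mul,
      nonsing_inv_mul_cancel_right _ _ (isUnit_iff_ne_zero.mpr hB)]
  rw [spectrum.mem_iff, isUnit_iff_isUnit_det, isUnit_iff_ne_zero, not_not] at hc
  exact ⟨c, by rw [hfac, det_mul, hc, zero_mul]⟩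

theorem exists_det_smul_add_smul_eq_zero [IsAlgClosed K] [Nonempty n] (A B : Matrix n n K) :
    ∃ s t : K, (s ≠ 0 ∨ t ≠ 0) ∧ (s • A + t • B).det = 0 := by
  by_cases hB : B.det = 0
  · exact ⟨0, 1, Or.inr one_ne_zero, by simpa using hB⟩
  · obtain ⟨c, hc⟩ := exists_det_smul_sub_eq_zero A hB
    exact ⟨-1, c, Or.inl (neg_ne_zero.mpr one_ne_zero), by rwa [neg_one_smul, neg_add_eq_sub]⟩

theorem exists_linearIndependent_det_eq_zero [IsAlgClosed K] [Nonempty n]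
    {X Y Z : Matrix n n K} (h : LinearIndependent K ![X, Y, Z]) :
    ∃ A ∈ span K {X, Y, Z}, ∃ B ∈ span K {X, Y, Z},
      LinearIndependent K ![A, B] ∧ A.det = 0 ∧ B.det = 0 := by
  have hX : X ∈ span K {X, Y, Z} := subset_span (by simp)
  have hY : Y ∈ span K {X, Y, Z} := subset_span (by simp)
  have hZ : Z ∈ span K {X, Y, Z} := subset_span (by simp)
  by_cases hZdet : Z.det = 0
  · obtain ⟨s, t, hst, hdet⟩ := exists_det_smul_add_smul_eq_zero X Y
    refine ⟨s • X + t • Y, add_mem (smul_mem _ _ hX) (smul_mem _ _ hY), Z, hZ, ?_, hdet, hZdet⟩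
    refine LinearIndependent.pair_iff.mpr fun a b hab ↦ ?_
    obtain ⟨has, hat, hb⟩ := h.eq_zero_of_triple (a := a * s) (b := a * t) (c := b)
      (by rw [← hab]; module)
    refine ⟨?_, hb⟩
    rcases hst with hs | ht
    · exact (mul_eq_zero.mp has).resolve_right hs
    · exact (mul_eq_zero.mp hat).resolve_right ht
  · obtain ⟨c₁, hc₁⟩ := exists_det_smul_sub_eq_zero X hZdet
    obtain ⟨c₂, hc₂⟩ := exists_det_smul_sub_eq_zero Y hZdet
    refine ⟨c₁ • Z - X, sub_mem (smul_mem _ _ hZ) hX, c₂ • Z - Y, sub_mem (smul_mem _ _ hZ) hY,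
      ?_, hc₁, hc₂⟩
    refine LinearIndependent.pair_iff.mpr fun a b hab ↦ ?_
    obtain ⟨ha, hb, -⟩ := h.eq_zero_of_triple (a := -a) (b := -b) (c := a * c₁ + b * c₂)
      (by rw [← hab]; module)
    exact ⟨neg_eq_zero.mp ha, neg_eq_zero.mp hb⟩

theorem exists_mem_span_rank_eq_two [IsAlgClosed K] {A B : Matrix (Fin 3) (Fin 3) K}
    (hA : A.IsSymm) (hB : B.IsSymm) (hAB : LinearIndependent K ![A, B])
    (hAdet : A.det = 0) (hBdet : B.det = 0) : ∃ M ∈ span K {A, B}, M.rank = 2 := by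
  have hA3 : A.rank < 3 := by simpa using rank_lt_card_of_det_eq_zero hAdet
  have hB3 : B.rank < 3 := by simpa using rank_lt_card_of_det_eq_zero hBdet
  by_cases hA1 : A.rank ≤ 1
  · by_cases hB1 : B.rank ≤ 1
    · obtain ⟨v, rfl⟩ := hA.exists_eq_vecMulVec_self hA1
      obtain ⟨w, rfl⟩ := hB.exists_eq_vecMulVec_self hB1
      exact ⟨_, add_mem (subset_span (by simp)) (subset_span (by simp)),
        rank_vecMulVec_self_add_vecMulVec_self (linearIndependent_of_vecMulVec_self hAB)⟩
    · exact ⟨B, subset_span (by simp), by omega⟩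
  · exact ⟨A, subset_span (by simp), by omega⟩

end Matrix

/-- Given three linearly independent complex symmetric `3×3` matrices, some
linear combination of them has rank exactly `2`. -/
theorem stmt_11 (X Y Z : Matrix (Fin 3) (Fin 3) ℂ)
    (hX : Xᵀ = X) (hY : Yᵀ = Y) (hZ : Zᵀ = Z)
    (hind : LinearIndependent ℂ ![X, Y, Z]) :
    ∃ x y z : ℂ, (x • X + y • Y + z • Z).rank = 2 := by
  obtain ⟨A, hA, B, hB, hAB, hAdet, hBdet⟩ := exists_linearIndependent_det_eq_zero hind
  have hsymm : ∀ M ∈ span ℂ {X, Y, Z}, M.IsSymm :=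
    fun M ↦ isSymm_of_mem_span (by simpa [IsSymm] using ⟨hX, hY, hZ⟩)
  obtain ⟨M, hM, hrank⟩ :=
    exists_mem_span_rank_eq_two (hsymm A hA) (hsymm B hB) hAB hAdet hBdet
  obtain ⟨x, y, z, rfl⟩ := mem_span_triple.mp (span_le.mpr (Set.pair_subset hA hB) hM)
  exact ⟨x, y, z, hrank⟩
end

section
/- Let F = α^{⊗3} + β^{⊗3} + γ^{⊗3} where α, β, γ ∈ ℂ³ are pairwise orthogonal under the bilinear form ⟨u,v⟩ = ∑ u_i v_i, and suppose rank{α,β,γ} = 3. Then none of α, β, γ is isotropic, and there exists a complex orthogonal matrix T and constants λ, μ, ν ∈ ℂ such that T^{⊗3}F = λ·e₁^{⊗3} + μ·e₂^{⊗3} + ν·e₃^{⊗3}. -/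
/-!
A linearly independent family orthogonal for the bilinear dot product has a diagonal, hence
invertible, Gram matrix, so none of its vectors is isotropic. Over `ℂ` each `⟨v,v⟩` has a
square root `s`, and the matrix with rows `v / s` is then complex orthogonal and sends each `v`
to `s • eᵢ`; transforming the cubic tensor slot by slot turns each summand `v^{⊗3}` into
`s³ • eᵢ^{⊗3}`.
-/

open Matrix

section OrthogonalFrame

variable {K : Type*} [Field K] {n : Type*} [Fintype n] {v : n → n → K}

theorem dotProduct_self_ne_zero_of_pairwise_orthogonal (hv : LinearIndependent K v)
    (horth : Pairwise fun i j => v i ⬝ᵥ v j = 0) (i : n) : v i ⬝ᵥ v i ≠ 0 := by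
  intro hii
  have hspan : Submodule.span K (Set.range v) = ⊤ :=
    hv.span_eq_top_of_card_eq_finrank' (by simp)
  have hzero : dotProductBilin K K (v i) = 0 := by
    refine LinearMap.ext_on_range hspan fun j => ?_
    rcases eq_or_ne i j with rfl | hij
    · exact hii
    · exact horth hij
  exact hv.ne_zero i (dotProduct_eq_zero _ fun w => LinearMap.congr_fun hzero w)

variable [DecidableEq n]

theorem of_mul_transpose_of_pairwise_orthogonal (horth : Pairwise fun i j => v i ⬝ᵥ v j = 0) :
    of v * (of v)ᵀ = diagonal fun i => v i ⬝ᵥ v i := by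
  ext i j
  change v i ⬝ᵥ v j = _
  rcases eq_or_ne i j with rfl | hij
  · rw [diagonal_apply_eq]
  · rw [diagonal_apply_ne _ hij, horth hij]

variable {s : n → K}

theorem diagonal_inv_mul_of_mul_transpose_self (horth : Pairwise fun i j => v i ⬝ᵥ v j = 0)
    (hs : ∀ i, s i ^ 2 = v i ⬝ᵥ v i) (hs0 : ∀ i, s i ≠ 0) :
    diagonal (fun i => (s i)⁻¹) * of v * (diagonal (fun i => (s i)⁻¹) * of v)ᵀ = 1 := by
  rw [transpose_mul, diagonal_transpose, Matrix.mul_assoc, ← Matrix.mul_assoc (of v),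
    of_mul_transpose_of_pairwise_orthogonal horth, diagonal_mul_diagonal, diagonal_mul_diagonal,
    ← diagonal_one]
  congr 1
  ext i
  rw [← hs i]
  field_simp [hs0 i]

theorem diagonal_inv_mul_of_mulVec_row (horth : Pairwise fun i j => v i ⬝ᵥ v j = 0)
    (hs : ∀ i, s i ^ 2 = v i ⬝ᵥ v i) (hs0 : ∀ i, s i ≠ 0) (j : n) :
    (diagonal (fun i => (s i)⁻¹) * of v) *ᵥ v j = s j • Pi.single j 1 := by
  ext i
  rw [← mulVec_mulVec, mulVec_diagonal]
  rcases eq_or_ne i j with rfl | hij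
  · simp only [mulVec, of_apply, ← hs i, Pi.smul_apply, Pi.single_eq_same, smul_eq_mul, mul_one]
    field_simp [hs0 i]
  · simp [mulVec, horth hij, hij]

end OrthogonalFrame

theorem sum_mul_mul_mul_cube {R n : Type*} [CommSemiring R] [Fintype n] (T : Matrix n n R)
    (a : n → R) (i j k : n) :
    ∑ i', ∑ j', ∑ k', T i i' * T j j' * T k k' * (a i' * a j' * a k') =
      (T *ᵥ a) i * (T *ᵥ a) j * (T *ᵥ a) k := by
  simp only [mulVec, dotProduct]
  rw [Finset.sum_mul_sum, Finset.sum_mul]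
  simp_rw [Finset.sum_mul_sum]
  refine Finset.sum_congr rfl fun _ _ => Finset.sum_congr rfl fun _ _ =>
    Finset.sum_congr rfl fun _ _ => by ring

/-- If `F = α^{⊗3} + β^{⊗3} + γ^{⊗3}` with `α, β, γ ∈ ℂ³` pairwise orthogonal
under the bilinear form and linearly independent, then none of them is
isotropic, and an orthogonal transformation brings `F` to
`λ·e₁^{⊗3} + μ·e₂^{⊗3} + ν·e₃^{⊗3}`. -/
theorem stmt_16 (α β γ : Fin 3 → ℂ)
    (hab : (∑ i, α i * β i) = 0) (hac : (∑ i, α i * γ i) = 0)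
    (hbc : (∑ i, β i * γ i) = 0)
    (hind : LinearIndependent ℂ ![α, β, γ])
    (F : Fin 3 → Fin 3 → Fin 3 → ℂ)
    (hF : ∀ i j k, F i j k = α i * α j * α k + β i * β j * β k + γ i * γ j * γ k)
    (e₁ e₂ e₃ : Fin 3 → ℂ)
    (he₁ : e₁ = ![1, 0, 0]) (he₂ : e₂ = ![0, 1, 0]) (he₃ : e₃ = ![0, 0, 1]) :
    ((∑ i, α i * α i) ≠ 0 ∧ (∑ i, β i * β i) ≠ 0 ∧ (∑ i, γ i * γ i) ≠ 0) ∧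
    ∃ (T : Matrix (Fin 3) (Fin 3) ℂ) (lam mu nu : ℂ),
      T * Tᵀ = 1 ∧
      ∀ i j k : Fin 3,
        (∑ i' : Fin 3, ∑ j' : Fin 3, ∑ k' : Fin 3,
          T i i' * T j j' * T k k' * F i' j' k')
        = lam * (e₁ i * e₁ j * e₁ k)
        + mu * (e₂ i * e₂ j * e₂ k)
        + nu * (e₃ i * e₃ j * e₃ k) := by
  set v : Fin 3 → Fin 3 → ℂ := ![α, β, γ]
  have horth : Pairwise fun i j => v i ⬝ᵥ v j = 0 := by
    change α ⬝ᵥ β = 0 at hab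
    change α ⬝ᵥ γ = 0 at hac
    change β ⬝ᵥ γ = 0 at hbc
    intro i j hij
    fin_cases i <;> fin_cases j <;> simp_all [v, dotProduct_comm]
  have hq := dotProduct_self_ne_zero_of_pairwise_orthogonal hind horth
  refine ⟨⟨hq 0, hq 1, hq 2⟩, ?_⟩
  choose s hs using fun i => IsAlgClosed.exists_pow_nat_eq (v i ⬝ᵥ v i) two_pos
  have hs0 : ∀ i, s i ≠ 0 := fun i h => hq i (by rw [← hs i, h, zero_pow two_ne_zero])
  set T := diagonal (fun i => (s i)⁻¹) * of v
  refine ⟨T, s 0 ^ 3, s 1 ^ 3, s 2 ^ 3,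
    diagonal_inv_mul_of_mul_transpose_self horth hs hs0, fun i j k => ?_⟩
  have hsingle : e₁ = Pi.single 0 1 ∧ e₂ = Pi.single 1 1 ∧ e₃ = Pi.single 2 1 := by
    subst he₁ he₂ he₃
    refine ⟨?_, ?_, ?_⟩ <;> funext i <;> fin_cases i <;> rfl
  obtain ⟨rfl, rfl, rfl⟩ := hsingle
  have hT := diagonal_inv_mul_of_mulVec_row horth hs hs0
  have hα : T *ᵥ α = s 0 • Pi.single 0 1 := hT 0
  have hβ : T *ᵥ β = s 1 • Pi.single 1 1 := hT 1
  have hγ : T *ᵥ γ = s 2 • Pi.single 2 1 := hT 2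
  simp only [hF, mul_add, Finset.sum_add_distrib, sum_mul_mul_mul_cube, hα, hβ, hγ,
    Pi.smul_apply, smul_eq_mul]
  ring
end

section
/- Let H be a field (or integral domain) and let [f_0, f_1, f_2] = [1, b, c] be a symmetric binary Boolean signature with c ≠ b². Define M = [[1, b], [0, √(c−b²)]]. Then the covariant transform of binary equality satisfies Mᵀ·I₂·M = [[1,b],[b,c]], and the contravariant transform M^{⊗3} applied to the symmetric ternary signature [a, 1, 0, 0] (i.e., a·e₀^{⊗3} + Sym(e₀^{⊗2}⊗e₁)) equals the symmetric signature [a+3b, √(c−b²), 0, 0]. -/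
/-!
`M` fixes `e₀` and sends `e₁` to `b e₀ + r e₁`, so `M^{⊗3}` fixes `e₀^{⊗3}` and sends each of the
three weight-one terms `e₀ ⊗ e₀ ⊗ e₁, …` of `[a, 1, 0, 0]` to `b e₀^{⊗3} + r (e₀ ⊗ e₀ ⊗ e₁)`;
summing gives `[a + 3b, r, 0, 0]`. The covariant identity is `b² + r² = c`.
-/

open Matrix

section UpperTriangular

variable {R : Type*} [CommRing R]

theorem transpose_mul_self_upperTriangular (b r : R) :
    (!![1, b; 0, r])ᵀ * !![1, b; 0, r] = !![1, b; b, b ^ 2 + r ^ 2] := by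
  ext i j
  fin_cases i <;> fin_cases j <;> simp [Matrix.mul_apply, Fin.sum_univ_two, sq]

theorem sum_upperTriangular_mul (b r : R) (x : Fin 2) (g : Fin 2 → R) :
    ∑ x' : Fin 2, !![1, b; 0, r] x x' * g x' = if x = 0 then g 0 + b * g 1 else r * g 1 := by
  fin_cases x <;> simp [Fin.sum_univ_two]

theorem upperTriangular_tensorCube_apply (a b r : R) (S : Fin 2 → Fin 2 → Fin 2 → R)
    (hS : ∀ x y z, S x y z =
      if (x : ℕ) + (y : ℕ) + (z : ℕ) = 0 then a
      else if (x : ℕ) + (y : ℕ) + (z : ℕ) = 1 then 1 else 0) (x y z : Fin 2) :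
    ∑ x' : Fin 2, ∑ y' : Fin 2, ∑ z' : Fin 2,
        !![1, b; 0, r] x x' * !![1, b; 0, r] y y' * !![1, b; 0, r] z z' * S x' y' z'
      = if (x : ℕ) + (y : ℕ) + (z : ℕ) = 0 then a + 3 * b
        else if (x : ℕ) + (y : ℕ) + (z : ℕ) = 1 then r else 0 := by
  have hnest : ∀ x' y' z' : Fin 2,
      !![1, b; 0, r] x x' * !![1, b; 0, r] y y' * !![1, b; 0, r] z z' * S x' y' z'
        = !![1, b; 0, r] x x' * (!![1, b; 0, r] y y' * (!![1, b; 0, r] z z' * S x' y' z')) :=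
    fun _ _ _ => by ring
  simp only [hnest, ← Finset.mul_sum, sum_upperTriangular_mul]
  fin_cases x <;> fin_cases y <;> fin_cases z <;> simp [hS]
  ring

end UpperTriangular

theorem stmt_19_general (a b c r : ℂ) (hr : r ^ 2 = c - b ^ 2)
    (M : Matrix (Fin 2) (Fin 2) ℂ) (hM : M = !![1, b; 0, r])
    (S : Fin 2 → Fin 2 → Fin 2 → ℂ)
    (hS : ∀ x y z, S x y z =
      if (x : ℕ) + (y : ℕ) + (z : ℕ) = 0 then a
      else if (x : ℕ) + (y : ℕ) + (z : ℕ) = 1 then 1 else 0) :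
    Mᵀ * (1 : Matrix (Fin 2) (Fin 2) ℂ) * M = !![1, b; b, c] ∧
    ∀ x y z : Fin 2,
      (∑ x' : Fin 2, ∑ y' : Fin 2, ∑ z' : Fin 2,
        M x x' * M y y' * M z z' * S x' y' z')
      = if (x : ℕ) + (y : ℕ) + (z : ℕ) = 0 then a + 3 * b
        else if (x : ℕ) + (y : ℕ) + (z : ℕ) = 1 then r else 0 := by
  subst hM
  have hc : c = b ^ 2 + r ^ 2 := by rw [hr]; ring
  refine ⟨?_, upperTriangular_tensorCube_apply a b r S hS⟩
  rw [Matrix.mul_one, transpose_mul_self_upperTriangular, hc]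

/-- For a nondegenerate binary signature `[1, b, c]` (`c ≠ b²`) and
`M = [[1, b], [0, √(c−b²)]]` (with `r² = c − b²` a fixed square root), the
covariant transform of binary equality satisfies `Mᵀ·I₂·M = [[1,b],[b,c]]`,
and the contravariant transform `M^{⊗3}` of the symmetric ternary signature
`[a, 1, 0, 0]` is `[a+3b, √(c−b²), 0, 0]`. -/
theorem stmt_19 (a b c r : ℂ) (hc : c ≠ b ^ 2) (hr : r ^ 2 = c - b ^ 2)
    (M : Matrix (Fin 2) (Fin 2) ℂ) (hM : M = !![1, b; 0, r])
    (S : Fin 2 → Fin 2 → Fin 2 → ℂ)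
    (hS : ∀ x y z, S x y z =
      if (x : ℕ) + (y : ℕ) + (z : ℕ) = 0 then a
      else if (x : ℕ) + (y : ℕ) + (z : ℕ) = 1 then 1 else 0) :
    Mᵀ * (1 : Matrix (Fin 2) (Fin 2) ℂ) * M = !![1, b; b, c] ∧
    ∀ x y z : Fin 2,
      (∑ x' : Fin 2, ∑ y' : Fin 2, ∑ z' : Fin 2,
        M x x' * M y y' * M z z' * S x' y' z')
      = if (x : ℕ) + (y : ℕ) + (z : ℕ) = 0 then a + 3 * b
        else if (x : ℕ) + (y : ℕ) + (z : ℕ) = 1 then r else 0 :=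
  stmt_19_general a b c r hr M hM S hS
end
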